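/- Let n ≥ 2 and t ≥ 1 be integers and θ ∈ (0,1). Then every cubature formula ν of strength 2t on S^{n-1} satisfies ‖ν‖_θ ≥ (C(n+t-1, n-1) + C(n+t-2, n-1))^{1−θ}, where C(a,b) denotes the binomial coefficient. -/

import Mathlib

open MeasureTheory Metric
open scoped ENNReal

noncomputable section

abbrev Sph (n : ℕ) : Type := Metric.sphere (0 : EuclideanSpace ℝ (Fin n)) 1

def sphMap {n : ℕ} (U : EuclideanSpace ℝ (Fin n) ≃ₗᵢ[ℝ] EuclideanSpace ℝ (Fin n)) :
    Sph n → Sph n := fun x =>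
  ⟨U x, by
    have hx : ‖(x : EuclideanSpace ℝ (Fin n))‖ = 1 := mem_sphere_zero_iff_norm.mp x.2
    simpa [mem_sphere_zero_iff_norm] using hx⟩

lemma sphMap_continuous {n : ℕ}
    (U : EuclideanSpace ℝ (Fin n) ≃ₗᵢ[ℝ] EuclideanSpace ℝ (Fin n)) :
    Continuous (sphMap U) :=
  (U.continuous.comp continuous_subtype_val).subtype_mk _

def antipode {n : ℕ} : Sph n → Sph n := fun x =>
  ⟨-(x : EuclideanSpace ℝ (Fin n)), by
    have hx : ‖(x : EuclideanSpace ℝ (Fin n))‖ = 1 := mem_sphere_zero_iff_norm.mp x.2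
    simpa [mem_sphere_zero_iff_norm] using hx⟩

/-- `σ` is invariant under all orthogonal transformations of `ℝⁿ`. -/
def IsRotationInvariant {n : ℕ} (σ : Measure (Sph n)) : Prop :=
  ∀ U : EuclideanSpace ℝ (Fin n) ≃ₗᵢ[ℝ] EuclideanSpace ℝ (Fin n),
    Measure.map (sphMap U) σ = σ

/-- Evaluation of a polynomial on `ℝⁿ` at a point of the sphere. -/
def polyEval {n : ℕ} (p : MvPolynomial (Fin n) ℝ) (x : Sph n) : ℝ :=
  MvPolynomial.eval (fun i => (x : EuclideanSpace ℝ (Fin n)) i) p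

/-- `ν` is finitely supported. -/
def IsFinSupported {n : ℕ} (ν : Measure (Sph n)) : Prop :=
  ∃ s : Finset (Sph n), ν ((↑s : Set (Sph n))ᶜ) = 0

/-- `ν` is a cubature formula of strength `t` w.r.t. the reference measure `σ`. -/
def IsCubature {n : ℕ} (t : ℕ) (σ ν : Measure (Sph n)) : Prop :=
  IsProbabilityMeasure ν ∧ IsFinSupported ν ∧
    ∀ p : MvPolynomial (Fin n) ℝ, p.totalDegree ≤ t →
      ∫ x, polyEval p x ∂ν = ∫ x, polyEval p x ∂σ

/-- `‖ν‖_θ = ∑ νᵢ^θ`, the sum of the `θ`-th powers of the point masses of `ν`. -/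
def thetaNorm {n : ℕ} (ν : Measure (Sph n)) (θ : ℝ) : ℝ :=
  ∑' u : Sph n, (ν {u}).toReal ^ θ


/-!
Let `V` be the space of restrictions to the sphere of polynomials of degree at most `t`. It contains
the restrictions of the homogeneous polynomials of degrees `t` and `t - 1`, and these are linearly
independent (they have opposite parity under `x ↦ -x`), so `dim V ≥ N`, the binomial sum of the
statement. A rotation-invariant `σ` charges every open set, so `L²(σ)` is an inner product on `V`.
For an `L²(σ)`-orthonormal basis `(φᵢ)` of `V` the Christoffel function `∑ φᵢ²` has
`σ`-mean `dim V`, so at some point `x₀` the reproducing kernel `g = ∑ φᵢ(x₀) φᵢ` satisfies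
`‖g‖² = g(x₀) ≥ N`. Given a node `ξ` of `ν`, rotate `ξ` to `x₀`: `(g ∘ U)²` has degree `≤ 2t`, so
`ν{ξ} g(x₀)² ≤ ∫ (g ∘ U)² dν = ∫ g² dσ = g(x₀)`, i.e. every weight is at most `1/N`. Weights
`wᵢ ≤ 1/N` summing to `1` satisfy `∑ wᵢ^θ ≥ ∑ wᵢ N^(1-θ) = N^(1-θ)`.
-/

open MvPolynomial
open scoped RealInnerProductSpace

namespace MvPolynomial

variable {σ R : Type*} [CommSemiring R]

theorem IsHomogeneous.eval_smul [Fintype σ] {F : MvPolynomial σ R} {d : ℕ}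
    (hF : F.IsHomogeneous d) (c : R) (x : σ → R) :
    eval (c • x) F = c ^ d * eval x F := by
  rw [eval_eq', eval_eq', Finset.mul_sum]
  refine Finset.sum_congr rfl fun m hm => ?_
  have hm : ∑ i, m i = d := by
    rw [← Finsupp.degree_eq_sum, Finsupp.degree_eq_weight_one]
    exact hF (mem_support_iff.mp hm)
  simp_rw [Pi.smul_apply, smul_eq_mul, mul_pow, Finset.prod_mul_distrib,
    Finset.prod_pow_eq_pow_sum, hm]
  ring

theorem totalDegree_aeval_le_of_isHomogeneous {τ : Type*} (g : σ → MvPolynomial τ R)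
    (hg : ∀ i, (g i).IsHomogeneous 1) (q : MvPolynomial σ R) :
    (aeval g q).totalDegree ≤ q.totalDegree := by
  conv_lhs => rw [← sum_homogeneousComponent q]
  rw [map_sum]
  refine (totalDegree_finsetSum _ _).trans (Finset.sup_le fun d hd => ?_)
  refine (((homogeneousComponent_isHomogeneous d q).aeval _ hg).totalDegree_le).trans ?_
  simpa [Nat.lt_succ_iff] using hd

theorem finrank_homogeneousSubmodule {K : Type*} [Field K] [Fintype σ] (d : ℕ) :
    Module.finrank K (homogeneousSubmodule σ K d) = (Fintype.card σ + d - 1).choose d := by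
  classical
  have hset : {m : σ →₀ ℕ | m.degree = d} =
      ((Finset.univ : Finset σ).finsuppAntidiag d : Set (σ →₀ ℕ)) := by
    ext m
    simp [Finset.mem_finsuppAntidiag, Finsupp.degree_eq_sum]
  rw [homogeneousSubmodule_eq_finsupp_supported, ← restrictSupport,
    Module.finrank_eq_nat_card_basis (basisRestrictSupport K _), hset, Nat.card_coe_set_eq,
    Set.ncard_coe_finset, Finset.card_finsuppAntidiag_nat_eq_choose, Finset.card_univ]

end MvPolynomial

section Christoffel

variable {X : Type*} [MeasurableSpace X] (μ : Measure X) (V : Submodule ℝ (X → ℝ))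

abbrev l2InnerCore (hint : ∀ f ∈ V, ∀ g ∈ V, Integrable (f * g) μ)
    (hdef : ∀ f ∈ V, f =ᵐ[μ] 0 → f = 0) : InnerProductSpace.Core ℝ V where
  inner f g := ∫ x, (f : X → ℝ) x * (g : X → ℝ) x ∂μ
  conj_inner_symm f g := by simp only [conj_trivial, mul_comm]
  re_inner_nonneg f := integral_nonneg fun x => mul_self_nonneg _
  add_left f g h := by
    simp only [Submodule.coe_add, Pi.add_apply, add_mul]
    exact integral_add (hint _ f.2 _ h.2) (hint _ g.2 _ h.2)
  smul_left f g r := by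
    simp only [Submodule.coe_smul, Pi.smul_apply, smul_eq_mul, mul_assoc, integral_const_mul,
      conj_trivial]
  definite f hf := by
    have hsq : (f : X → ℝ) * (f : X → ℝ) =ᵐ[μ] 0 :=
      (integral_eq_zero_iff_of_nonneg (fun x => mul_self_nonneg _) (hint _ f.2 _ f.2)).mp hf
    exact Subtype.ext (hdef _ f.2 (hsq.mono fun x hx => mul_self_eq_zero.mp hx))

theorem exists_integral_sq_eq_apply_and_finrank_le [IsProbabilityMeasure μ]
    [FiniteDimensional ℝ V] (hint : ∀ f ∈ V, ∀ g ∈ V, Integrable (f * g) μ)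
    (hdef : ∀ f ∈ V, f =ᵐ[μ] 0 → f = 0) :
    ∃ g ∈ V, ∃ x₀, ∫ x, g x ^ 2 ∂μ = g x₀ ∧ (Module.finrank ℝ V : ℝ) ≤ g x₀ := by
  have hsq : ∀ f ∈ V, Integrable (fun x => f x ^ 2) μ := fun f hf => by
    simp only [sq]; exact hint f hf f hf
  let core := l2InnerCore μ V hint hdef
  let _ : NormedAddCommGroup V := core.toNormedAddCommGroup
  let _ : InnerProductSpace ℝ V := InnerProductSpace.ofCore core.toCore
  have hinner : ∀ f g : V, ⟪f, g⟫ = ∫ x, (f : X → ℝ) x * (g : X → ℝ) x ∂μ := fun _ _ => rfl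
  let φ := stdOrthonormalBasis ℝ V
  let F : X → ℝ := fun x => ∑ i, (φ i : X → ℝ) x ^ 2
  have hF : ∫ x, F x ∂μ = Module.finrank ℝ V := by
    rw [integral_finsetSum _ fun i _ => hsq _ (φ i).2]
    simp [sq, ← hinner, φ.orthonormal.1]
  obtain ⟨x₀, hx₀⟩ := exists_integral_le (μ := μ) (f := F)
    (integrable_finsetSum _ fun i _ => hsq _ (φ i).2)
  -- `φ.repr.symm c = ∑ φᵢ(x₀) φᵢ` is the reproducing kernel of `V` at `x₀`.
  let c : EuclideanSpace ℝ (Fin (Module.finrank ℝ V)) :=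
    WithLp.toLp 2 fun i => (φ i : X → ℝ) x₀
  have hgx₀ : (φ.repr.symm c : X → ℝ) x₀ = F x₀ := by
    rw [← φ.sum_repr_symm]
    simp [F, c, sq]
  refine ⟨_, (φ.repr.symm c).2, x₀, ?_, hF ▸ hgx₀ ▸ hx₀⟩
  calc ∫ x, (φ.repr.symm c : X → ℝ) x ^ 2 ∂μ = ⟪φ.repr.symm c, φ.repr.symm c⟫ := by
        simp only [sq, hinner]
    _ = ⟪c, c⟫ := φ.repr.symm.inner_map_map c c
    _ = (φ.repr.symm c : X → ℝ) x₀ := by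
        rw [hgx₀, PiLp.inner_apply]
        simp [c, F, sq]

end Christoffel

theorem mul_rpow_one_sub_le_rpow {w c θ : ℝ} (hw : 0 ≤ w) (hc : 0 ≤ c) (hwc : w * c ≤ 1)
    (hθ : θ ≤ 1) : w * c ^ (1 - θ) ≤ w ^ θ := by
  calc w * c ^ (1 - θ) = w ^ θ * (w * c) ^ (1 - θ) := by
        rw [Real.mul_rpow hw hc, ← mul_assoc, ← Real.rpow_add' hw (by norm_num),
          add_sub_cancel, Real.rpow_one]
    _ ≤ w ^ θ * 1 := by
        gcongr
        exact Real.rpow_le_one (by positivity) hwc (by linarith)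
    _ = w ^ θ := mul_one _

theorem rpow_one_sub_le_tsum_rpow {X : Type*} [MeasurableSpace X] [MeasurableSingletonClass X]
    (ν : Measure X) [IsProbabilityMeasure ν] {s : Finset X} (hs : ν (↑s)ᶜ = 0) {θ c : ℝ}
    (hθ0 : 0 < θ) (hθ1 : θ ≤ 1) (hc : 0 ≤ c) (hνc : ∀ u, (ν {u}).toReal * c ≤ 1) :
    c ^ (1 - θ) ≤ ∑' u, (ν {u}).toReal ^ θ := by
  have hsum : ∑ u ∈ s, (ν {u}).toReal = 1 := by
    rw [← ENNReal.toReal_sum fun _ _ => measure_ne_top _ _, sum_measure_singleton,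
      (prob_compl_eq_zero_iff s.measurableSet).mp hs, ENNReal.toReal_one]
  have htsum : ∑' u, (ν {u}).toReal ^ θ = ∑ u ∈ s, (ν {u}).toReal ^ θ := by
    refine tsum_eq_sum fun u hu => ?_
    rw [measure_mono_null (Set.singleton_subset_iff.2 hu) hs, ENNReal.toReal_zero,
      Real.zero_rpow hθ0.ne']
  calc c ^ (1 - θ) = ∑ u ∈ s, (ν {u}).toReal * c ^ (1 - θ) := by
        rw [← Finset.sum_mul, hsum, one_mul]
    _ ≤ ∑ u ∈ s, (ν {u}).toReal ^ θ :=
        Finset.sum_le_sum fun u _ => mul_rpow_one_sub_le_rpow ENNReal.toReal_nonneg hc (hνc u) hθ1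
    _ = ∑' u, (ν {u}).toReal ^ θ := htsum.symm

section SpherePolynomials

variable {n : ℕ}

variable (n) in
def polyEvalₐ : MvPolynomial (Fin n) ℝ →ₐ[ℝ] (Sph n → ℝ) :=
  AlgHom.pi fun x => aeval fun i => (x : EuclideanSpace ℝ (Fin n)) i

theorem continuous_polyEval (p : MvPolynomial (Fin n) ℝ) : Continuous (polyEval p) :=
  (continuous_eval p).comp <| continuous_pi fun i =>
    (EuclideanSpace.proj i).continuous.comp continuous_subtype_val

theorem polyEval_antipode {F : MvPolynomial (Fin n) ℝ} {d : ℕ} (hF : F.IsHomogeneous d)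
    (x : Sph n) : polyEval F (antipode x) = (-1) ^ d * polyEval F x := by
  have hcoord : (fun i => (antipode x : EuclideanSpace ℝ (Fin n)) i)
      = (-1 : ℝ) • fun i => (x : EuclideanSpace ℝ (Fin n)) i := by
    ext i
    simp [antipode]
  rw [polyEval, polyEval, hcoord, hF.eval_smul]

theorem exists_eq_smul_sphere (hn : 0 < n) (r : Fin n → ℝ) :
    ∃ c : ℝ, ∃ u : Sph n, r = c • fun i => (u : EuclideanSpace ℝ (Fin n)) i := by
  have : Nonempty (Fin n) := ⟨⟨0, hn⟩⟩
  by_cases hr : r = 0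
  · obtain ⟨u, hu⟩ := (NormedSpace.sphere_nonempty (x := (0 : EuclideanSpace ℝ (Fin n)))
      (r := 1)).mpr zero_le_one
    exact ⟨0, ⟨u, hu⟩, by simp [hr]⟩
  · set v : EuclideanSpace ℝ (Fin n) := WithLp.toLp 2 r
    have hv : v ≠ 0 := by simpa [v] using hr
    refine ⟨‖v‖, ⟨‖v‖⁻¹ • v, by simp [norm_smul, hv]⟩, ?_⟩
    ext i
    simp [v, hv]

theorem MvPolynomial.IsHomogeneous.eq_zero_of_polyEval_eq_zero (hn : 0 < n)
    {F : MvPolynomial (Fin n) ℝ} {d : ℕ} (hF : F.IsHomogeneous d)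
    (hvan : ∀ x : Sph n, polyEval F x = 0) : F = 0 := by
  refine hF.eq_zero_of_forall_eval_eq_zero fun r => ?_
  obtain ⟨c, u, rfl⟩ := exists_eq_smul_sphere hn r
  rw [hF.eval_smul, ← polyEval, hvan, mul_zero]

theorem eq_zero_of_polyEval_add_eq_zero (hn : 0 < n) {P Q : MvPolynomial (Fin n) ℝ} {d : ℕ}
    (hP : P.IsHomogeneous (d + 1)) (hQ : Q.IsHomogeneous d)
    (hvan : ∀ x : Sph n, polyEval (P + Q) x = 0) : P = 0 ∧ Q = 0 := by
  have hsplit : ∀ x, polyEval (P + Q) x = polyEval P x + polyEval Q x := fun x => map_add _ _ _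
  have hboth : ∀ x : Sph n, polyEval P x = 0 ∧ polyEval Q x = 0 := by
    intro x
    have h₁ := hvan x
    have h₂ := hvan (antipode x)
    rw [hsplit] at h₁
    rw [hsplit, polyEval_antipode hP, polyEval_antipode hQ, pow_succ] at h₂
    rcases neg_one_pow_eq_or ℝ d with hd | hd <;> rw [hd] at h₂ <;> constructor <;> linarith
  exact ⟨hP.eq_zero_of_polyEval_eq_zero hn fun x => (hboth x).1,
    hQ.eq_zero_of_polyEval_eq_zero hn fun x => (hboth x).2⟩

variable (n) in
def spherePoly (t : ℕ) : Submodule ℝ (Sph n → ℝ) :=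
  (restrictTotalDegree (Fin n) ℝ t).map (polyEvalₐ n).toLinearMap

instance (t : ℕ) : FiniteDimensional ℝ (spherePoly n t) := by
  unfold spherePoly; infer_instance

theorem continuous_of_mem_spherePoly {t : ℕ} {f : Sph n → ℝ} (hf : f ∈ spherePoly n t) :
    Continuous f := by
  obtain ⟨p, -, rfl⟩ := hf
  exact continuous_polyEval p

theorem choose_add_choose_le_finrank_spherePoly (hn : 0 < n) {t : ℕ} (ht : 0 < t) :
    (n + t - 1).choose (n - 1) + (n + t - 2).choose (n - 1) ≤
      Module.finrank ℝ (spherePoly n t) := by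
  obtain ⟨d, rfl⟩ := Nat.exists_eq_add_one_of_ne_zero ht.ne'
  let H := homogeneousSubmodule (Fin n) ℝ
  have (k : ℕ) : Module.Finite ℝ (H k) :=
    Module.Finite.iff_fg.mpr (homogeneousSubmodule_fg _ _ k)
  let Φ : (H (d + 1) × H d) →ₗ[ℝ] (Sph n → ℝ) :=
    (polyEvalₐ n).toLinearMap ∘ₗ (H (d + 1)).subtype.coprod (H d).subtype
  have hΦ : Function.Injective Φ := by
    refine (injective_iff_map_eq_zero Φ).mpr fun ⟨P, Q⟩ h => ?_
    obtain ⟨hP, hQ⟩ := eq_zero_of_polyEval_add_eq_zero hn P.2 Q.2 (congrFun h)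
    exact Prod.ext (Subtype.ext hP) (Subtype.ext hQ)
  have hrange : LinearMap.range Φ ≤ spherePoly n (d + 1) := by
    rintro _ ⟨⟨P, Q⟩, rfl⟩
    refine ⟨P + Q, ?_, rfl⟩
    rw [SetLike.mem_coe, mem_restrictTotalDegree]
    exact (totalDegree_add _ _).trans
      (max_le P.2.totalDegree_le (Q.2.totalDegree_le.trans d.le_succ))
  calc (n + (d + 1) - 1).choose (n - 1) + (n + (d + 1) - 2).choose (n - 1)
      = Module.finrank ℝ (H (d + 1) × H d) := by
        rw [Module.finrank_prod, finrank_homogeneousSubmodule, finrank_homogeneousSubmodule,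
          Fintype.card_fin,
          Nat.choose_symm_of_eq_add (show n + (d + 1) - 1 = n - 1 + (d + 1) by omega),
          Nat.choose_symm_of_eq_add (show n + (d + 1) - 2 = n - 1 + d by omega)]
        congr 2
    _ = Module.finrank ℝ (LinearMap.range Φ) := (LinearMap.finrank_range_of_inj hΦ).symm
    _ ≤ _ := Submodule.finrank_mono hrange

end SpherePolynomials

section Rotation

variable {n : ℕ} {σ : Measure (Sph n)}

theorem exists_sphMap_apply_eq (x y : Sph n) :
    ∃ U : EuclideanSpace ℝ (Fin n) ≃ₗᵢ[ℝ] EuclideanSpace ℝ (Fin n), sphMap U x = y := by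
  refine ⟨Submodule.reflection (ℝ ∙ ((x : EuclideanSpace ℝ (Fin n)) - y))ᗮ, Subtype.ext ?_⟩
  apply Submodule.reflection_sub
  rw [mem_sphere_zero_iff_norm.mp x.2, mem_sphere_zero_iff_norm.mp y.2]

theorem IsRotationInvariant.measure_ball_eq (hσ : IsRotationInvariant σ) (x y : Sph n) (r : ℝ) :
    σ (ball x r) = σ (ball y r) := by
  obtain ⟨U, hU⟩ := exists_sphMap_apply_eq x y
  have hpre : sphMap U ⁻¹' ball y r = ball x r := by
    ext z
    simp only [Set.mem_preimage, mem_ball, ← hU, Subtype.dist_eq]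
    exact (U.dist_map z x).symm ▸ Iff.rfl
  rw [← hpre, ← Measure.map_apply (sphMap_continuous U).measurable measurableSet_ball, hσ U]

theorem IsRotationInvariant.isOpenPosMeasure [NeZero σ] (hσ : IsRotationInvariant σ) :
    σ.IsOpenPosMeasure := by
  refine ⟨fun O hO ⟨x, hx⟩ hnull => ?_⟩
  obtain ⟨r, hr, hball⟩ := Metric.isOpen_iff.mp hO x hx
  obtain ⟨s, -, hs, hcover⟩ := finite_cover_balls_of_compact (isCompact_univ (X := Sph n)) hr
  have huniv : σ Set.univ = 0 := measure_mono_null hcover <|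
    (measure_biUnion_null_iff hs.countable).mpr fun y _ =>
      (hσ.measure_ball_eq y x r).trans (measure_mono_null hball hnull)
  exact NeZero.ne σ (Measure.measure_univ_eq_zero.mp huniv)

theorem IsRotationInvariant.integral_comp_sphMap (hσ : IsRotationInvariant σ)
    (U : EuclideanSpace ℝ (Fin n) ≃ₗᵢ[ℝ] EuclideanSpace ℝ (Fin n)) {f : Sph n → ℝ}
    (hf : Continuous f) : ∫ x, f (sphMap U x) ∂σ = ∫ x, f x ∂σ := by
  conv_rhs => rw [← hσ U]
  exact (integral_map (sphMap_continuous U).aemeasurable hf.aestronglyMeasurable).symm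

theorem exists_polyEval_eq_comp_sphMap
    (U : EuclideanSpace ℝ (Fin n) ≃ₗᵢ[ℝ] EuclideanSpace ℝ (Fin n)) (q : MvPolynomial (Fin n) ℝ) :
    ∃ q' : MvPolynomial (Fin n) ℝ,
      q'.totalDegree ≤ q.totalDegree ∧ polyEval q' = polyEval q ∘ sphMap U := by
  let g : Fin n → MvPolynomial (Fin n) ℝ := fun i =>
    ∑ j, C ((U (EuclideanSpace.single j 1) : EuclideanSpace ℝ (Fin n)) i) * X j
  have hg : ∀ i, (g i).IsHomogeneous 1 := fun i =>
    IsHomogeneous.sum _ _ _ fun j _ => isHomogeneous_C_mul_X _ j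
  refine ⟨aeval g q, totalDegree_aeval_le_of_isHomogeneous g hg q, funext fun x => ?_⟩
  have hU : ∀ i, eval (fun j => (x : EuclideanSpace ℝ (Fin n)) j) (g i)
      = (U x : EuclideanSpace ℝ (Fin n)) i := by
    intro i
    conv_rhs => rw [← (EuclideanSpace.basisFun (Fin n) ℝ).sum_repr x]
    simp [g, map_sum, mul_comm]
  simp only [polyEval, Function.comp_apply, aeval_def, algebraMap_eq, ← eval_assoc]
  exact congrArg (eval · q) (funext hU)

theorem IsRotationInvariant.exists_polyEval_integral_sq_eq_apply_and_finrank_le [IsProbabilityMeasure σ]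
    (hσ : IsRotationInvariant σ) (t : ℕ) :
    ∃ q : MvPolynomial (Fin n) ℝ, q.totalDegree ≤ t ∧ ∃ x₀,
      ∫ x, polyEval q x ^ 2 ∂σ = polyEval q x₀ ∧
        (Module.finrank ℝ (spherePoly n t) : ℝ) ≤ polyEval q x₀ := by
  have : σ.IsOpenPosMeasure := hσ.isOpenPosMeasure
  have hint : ∀ f ∈ spherePoly n t, ∀ g ∈ spherePoly n t, Integrable (f * g) σ :=
    fun f hf g hg => ((continuous_of_mem_spherePoly hf).mul
      (continuous_of_mem_spherePoly hg)).integrable_of_hasCompactSupport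
      (HasCompactSupport.of_compactSpace _)
  have hdef : ∀ f ∈ spherePoly n t, f =ᵐ[σ] 0 → f = 0 := fun f hf =>
    ((continuous_of_mem_spherePoly hf).ae_eq_iff_eq σ continuous_const).mp
  obtain ⟨_, ⟨q, hq, rfl⟩, x₀, hq_int, hq_x₀⟩ :=
    exists_integral_sq_eq_apply_and_finrank_le σ (spherePoly n t) hint hdef
  rw [SetLike.mem_coe, mem_restrictTotalDegree] at hq
  exact ⟨q, hq, x₀, hq_int, hq_x₀⟩

theorem IsCubature.measure_singleton_mul_sq_le [IsFiniteMeasure σ] (hσ : IsRotationInvariant σ)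
    {t : ℕ} {ν : Measure (Sph n)} (hν : IsCubature (2 * t) σ ν) {q : MvPolynomial (Fin n) ℝ}
    (hq : q.totalDegree ≤ t) (ξ x₀ : Sph n) :
    (ν {ξ}).toReal * polyEval q x₀ ^ 2 ≤ ∫ x, polyEval q x ^ 2 ∂σ := by
  obtain ⟨hνprob, -, hcub⟩ := hν
  obtain ⟨U, hU⟩ := exists_sphMap_apply_eq ξ x₀
  obtain ⟨q', hq'deg, hq'⟩ := exists_polyEval_eq_comp_sphMap U q
  have hsq : polyEval (q' ^ 2) = fun x => polyEval q (sphMap U x) ^ 2 := by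
    ext x
    rw [polyEval, map_pow, ← polyEval, hq', Function.comp_apply]
  have hdeg : (q' ^ 2).totalDegree ≤ 2 * t := (totalDegree_pow q' 2).trans (by omega)
  have hcont : Continuous (polyEval (q' ^ 2)) := continuous_polyEval _
  calc (ν {ξ}).toReal * polyEval q x₀ ^ 2 = ∫ x in {ξ}, polyEval (q' ^ 2) x ∂ν := by
        simp only [integral_singleton, hsq, hU, measureReal_def, smul_eq_mul]
    _ ≤ ∫ x, polyEval (q' ^ 2) x ∂ν :=
        setIntegral_le_integral
          (hcont.integrable_of_hasCompactSupport (HasCompactSupport.of_compactSpace _))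
          (.of_forall fun x => by simp only [hsq, Pi.zero_apply]; positivity)
    _ = ∫ x, polyEval (q' ^ 2) x ∂σ := hcub _ hdeg
    _ = ∫ x, polyEval q x ^ 2 ∂σ := by
        rw [hsq]
        exact hσ.integral_comp_sphMap U ((continuous_polyEval q).pow 2)

end Rotation

theorem stmt10 (n t : ℕ) (hn : 2 ≤ n) (ht : 1 ≤ t)
    (σ : Measure (Sph n)) [IsProbabilityMeasure σ] (hσ : IsRotationInvariant σ)
    (θ : ℝ) (hθ : θ ∈ Set.Ioo (0 : ℝ) 1)
    (ν : Measure (Sph n)) (hν : IsCubature (2 * t) σ ν) :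
    (((n + t - 1).choose (n - 1) + (n + t - 2).choose (n - 1) : ℕ) : ℝ) ^ (1 - θ) ≤
      thetaNorm ν θ := by
  obtain ⟨q, hq, x₀, hq_int, hq_x₀⟩ := hσ.exists_polyEval_integral_sq_eq_apply_and_finrank_le t
  have hN_le : (((n + t - 1).choose (n - 1) + (n + t - 2).choose (n - 1) : ℕ) : ℝ) ≤
      polyEval q x₀ :=
    (Nat.cast_le.mpr (choose_add_choose_le_finrank_spherePoly (by omega) ht)).trans hq_x₀
  have hN_pos : (0 : ℝ) < (n + t - 1).choose (n - 1) := by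
    exact_mod_cast Nat.choose_pos (by omega)
  have : IsProbabilityMeasure ν := hν.1
  obtain ⟨s, hs⟩ := hν.2.1
  refine rpow_one_sub_le_tsum_rpow ν hs hθ.1 hθ.2.le (Nat.cast_nonneg _) fun ξ => ?_
  have hw := hν.measure_singleton_mul_sq_le hσ hq ξ x₀
  rw [hq_int] at hw
  have hw_nonneg : 0 ≤ (ν {ξ}).toReal := ENNReal.toReal_nonneg
  push_cast at hN_le ⊢
  nlinarith [mul_le_mul_of_nonneg_left hN_le hw_nonneg]
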